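/- For any expression e and variable x, x ∈ strict(e) implies x ∈ fv(e) and x does not occur exclusively under lambda binders in e. -/
import Mathlib


/-- Patterns: integer literals or constructor patterns binding variables. -/
inductive Pat where
  | pnum (n : ℤ)
  | pcon (k : String) (xs : List String)
deriving DecidableEq

/-- Expressions of the higher-order call-by-value language:
`e ::= n | x | g | f e | λx.e | k ē | e₁ ⊕ e₂ | case e of {pᵢ → eᵢ}
      | let x = e in f | letrec g = v in e`. -/
inductive Expr where
  | num (n : ℤ)                                -- integer literal
  | var (x : String)                           -- variable
  | fnc (g : String)                           -- function name
  | app (f e : Expr)                           -- application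
  | lam (x : String) (e : Expr)                -- lambda abstraction
  | con (k : String) (es : List Expr)          -- constructor application
  | prim (e₁ e₂ : Expr)                        -- primitive operation e₁ ⊕ e₂
  | cse (e : Expr) (bs : List (Pat × Expr))    -- case expression
  | lett (x : String) (e f : Expr)             -- let x = e in f
  | letrec (g : String) (v e : Expr)           -- letrec g = v in e

/-- Variables bound by a pattern. -/
def patVars : Pat → Finset String
  | .pnum _ => ∅
  | .pcon _ xs => xs.toFinset

mutual
/-- Free variables of an expression. -/
def fv : Expr → Finset String
  | .num _ => ∅
  | .var x => {x}
  | .fnc _ => ∅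
  | .app f e => fv f ∪ fv e
  | .lam x e => fv e \ {x}
  | .con _ es => fvList es
  | .prim a b => fv a ∪ fv b
  | .cse e bs => fv e ∪ fvBranches bs
  | .lett x e f => fv e ∪ (fv f \ {x})
  | .letrec _ v f => fv v ∪ fv f

def fvList : List Expr → Finset String
  | [] => ∅
  | e :: es => fv e ∪ fvList es

def fvBranches : List (Pat × Expr) → Finset String
  | [] => ∅
  | (p, e) :: bs => (fv e \ patVars p) ∪ fvBranches bs
end

mutual
/-- Capture-free substitution `[v/x]e` (respecting shadowing binders). -/
def subst (v : Expr) (x : String) : Expr → Expr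
  | .num n => .num n
  | .var y => if y = x then v else .var y
  | .fnc g => .fnc g
  | .app f e => .app (subst v x f) (subst v x e)
  | .lam y e => if y = x then .lam y e else .lam y (subst v x e)
  | .con k es => .con k (substList v x es)
  | .prim a b => .prim (subst v x a) (subst v x b)
  | .cse e bs => .cse (subst v x e) (substBranches v x bs)
  | .lett y e f => .lett y (subst v x e) (if y = x then f else subst v x f)
  | .letrec g w f => .letrec g (subst v x w) (subst v x f)

def substList (v : Expr) (x : String) : List Expr → List Expr
  | [] => []
  | e :: es => subst v x e :: substList v x es

def substBranches (v : Expr) (x : String) : List (Pat × Expr) → List (Pat × Expr)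
  | [] => []
  | (p, e) :: bs => (p, if x ∈ patVars p then e else subst v x e) :: substBranches v x bs
end

mutual
/-- The strict variables of an expression. -/
def strictv : Expr → Finset String
  | .num _ => ∅
  | .var x => {x}
  | .fnc _ => ∅
  | .app f e => strictv f ∪ strictv e
  | .lam _ _ => ∅
  | .con _ es => strictvList es
  | .prim a b => strictv a ∪ strictv b
  | .cse e bs => strictv e ∪ strictvBranches bs
  | .lett x e f => strictv e ∪ (strictv f \ {x})
  | .letrec _ _ f => strictv f

def strictvList : List Expr → Finset String
  | [] => ∅
  | e :: es => strictv e ∪ strictvList es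

/-- The intersection `⋂ (strict(eᵢ) \ fv(pᵢ))` over the branches of a case. -/
def strictvBranches : List (Pat × Expr) → Finset String
  | [] => ∅
  | [(p, e)] => strictv e \ patVars p
  | (p, e) :: bs => (strictv e \ patVars p) ∩ strictvBranches bs
end

mutual
/-- Free variables of an expression that have an occurrence *not* under a
lambda binder (the letrec right-hand side is a lambda abstraction, so its
occurrences count as under a lambda). -/
def nonLamFv : Expr → Finset String
  | .num _ => ∅
  | .var x => {x}
  | .fnc _ => ∅
  | .app f e => nonLamFv f ∪ nonLamFv e
  | .lam _ _ => ∅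
  | .con _ es => nonLamFvList es
  | .prim a b => nonLamFv a ∪ nonLamFv b
  | .cse e bs => nonLamFv e ∪ nonLamFvBranches bs
  | .lett x e f => nonLamFv e ∪ (nonLamFv f \ {x})
  | .letrec _ _ f => nonLamFv f

def nonLamFvList : List Expr → Finset String
  | [] => ∅
  | e :: es => nonLamFv e ∪ nonLamFvList es

def nonLamFvBranches : List (Pat × Expr) → Finset String
  | [] => ∅
  | (p, e) :: bs => (nonLamFv e \ patVars p) ∪ nonLamFvBranches bs
end

mutual
theorem strict_aux (e : Expr) (x : String)
    (h : x ∈ strictv e) : x ∈ fv e ∧ x ∈ nonLamFv e := by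
  cases e with
  | num n => simp [strictv] at h
  | var y => simp [strictv] at h; simp [fv, nonLamFv, h]
  | fnc g => simp [strictv] at h
  | app f e =>
    simp [strictv] at h
    rcases h with h | h
    · have := strict_aux f x h; simp [fv, nonLamFv]; tauto
    · have := strict_aux e x h; simp [fv, nonLamFv]; tauto
  | lam y e => simp [strictv] at h
  | con k es =>
    simp [strictv] at h
    have := strict_auxList es x h
    simpa [fv, nonLamFv] using this
  | prim a b =>
    simp [strictv] at h
    rcases h with h | h
    · have := strict_aux a x h; simp [fv, nonLamFv]; tauto
    · have := strict_aux b x h; simp [fv, nonLamFv]; tauto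
  | cse e bs =>
    simp [strictv] at h
    rcases h with h | h
    · have := strict_aux e x h; simp [fv, nonLamFv]; tauto
    · have := strict_auxBranches bs x h; simp [fv, nonLamFv]; tauto
  | lett y e f =>
    simp [strictv] at h
    rcases h with h | ⟨h, hy⟩
    · have := strict_aux e x h; simp [fv, nonLamFv]; tauto
    · have := strict_aux f x h; simp [fv, nonLamFv]; tauto
  | letrec g v f =>
    simp [strictv] at h
    have := strict_aux f x h
    simp [fv, nonLamFv]; tauto

theorem strict_auxList (es : List Expr) (x : String)
    (h : x ∈ strictvList es) : x ∈ fvList es ∧ x ∈ nonLamFvList es := by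
  cases es with
  | nil => simp [strictvList] at h
  | cons e es =>
    simp [strictvList] at h
    rcases h with h | h
    · have := strict_aux e x h; simp [fvList, nonLamFvList]; tauto
    · have := strict_auxList es x h; simp [fvList, nonLamFvList]; tauto

theorem strict_auxBranches (bs : List (Pat × Expr)) (x : String)
    (h : x ∈ strictvBranches bs) : x ∈ fvBranches bs ∧ x ∈ nonLamFvBranches bs := by
  cases bs with
  | nil => simp [strictvBranches] at h
  | cons b bs =>
    obtain ⟨p, e⟩ := b
    cases bs with
    | nil =>
      simp [strictvBranches] at h
      have := strict_aux e x h.1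
      simp [fvBranches, nonLamFvBranches]; tauto
    | cons b' bs' =>
      rw [show strictvBranches ((p, e) :: b' :: bs') =
            (strictv e \ patVars p) ∩ strictvBranches (b' :: bs') from rfl] at h
      simp at h
      have := strict_aux e x h.1.1
      simp [fvBranches, nonLamFvBranches]; tauto
end

/-- if `x ∈ strict(e)` then `x` is free in `e` and `x` does not
occur exclusively under lambda binders in `e` (i.e. it has a non-lambda free
occurrence). -/
theorem strict_mem_fv_and_not_only_under_lambda (e : Expr) (x : String)
    (h : x ∈ strictv e) : x ∈ fv e ∧ x ∈ nonLamFv e :=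
  strict_aux e x h
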